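/- Let n ≥ 4. The set of inner products {⟨û₁, w(û₁)⟩ : w ∈ W(Dₙ)} equals {(n − 4k)/n : k a natural number with 2k ≤ n}. (Equivalently: the possible distances between two vertices of type 1 of the Coxeter complex of type Dₙ are exactly arccos((n−4k)/n) for k = 0, 1, …, ⌊n/2⌋.) -/

import Mathlib

noncomputable section

open scoped RealInnerProductSpace

/-- The fundamental root vectors of the root system of type `Dₙ` in `ℝⁿ`:
`r₁ = e₁ + e₂` and `rᵢ = eᵢ − eᵢ₋₁` for `2 ≤ i ≤ n` (here indexed by `Fin n`,
with `j = 0` corresponding to `r₁`). -/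
def DnRoot (n : ℕ) : Fin n → EuclideanSpace ℝ (Fin n) := fun j =>
  if (j : ℕ) = 0 then WithLp.toLp 2 (fun i => if (i : ℕ) ≤ 1 then (1 : ℝ) else 0)
  else WithLp.toLp 2 (fun i => if (i : ℕ) = (j : ℕ) then (1 : ℝ)
        else if (i : ℕ) + 1 = (j : ℕ) then -1 else 0)

/-- The Weyl group `W(Dₙ)`: the subgroup of linear isometries of `ℝⁿ` generated by the
reflections `s_r(x) = x − 2(⟨x,r⟩/⟨r,r⟩)r` in the fundamental root vectors. -/
def WeylD (n : ℕ) : Subgroup (EuclideanSpace ℝ (Fin n) ≃ₗᵢ[ℝ] EuclideanSpace ℝ (Fin n)) :=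
  Subgroup.closure
    { f | ∃ j : Fin n, ∀ x : EuclideanSpace ℝ (Fin n),
        f x = x - ((2 * ⟪x, DnRoot n j⟫ / ⟪DnRoot n j, DnRoot n j⟫) • DnRoot n j) }

/-- `û₁ = (1,1,…,1)/√n`, a unit vector representing a vertex of type 1 of the
Coxeter complex of type `Dₙ`. -/
def u1hatD (n : ℕ) : EuclideanSpace ℝ (Fin n) := WithLp.toLp 2 (fun _ => 1 / Real.sqrt n)

/-!
Every generator of `W(Dₙ)` acts on coordinates as a signed permutation: the reflection in
`r₁ = e₁ + e₂` swaps the first two coordinates and negates both, the others swap adjacent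
coordinates. Hence each coordinate of `w û₁` is `±1/√n`, and since `∏ᵢ xᵢ` is `W(Dₙ)`-invariant
the number of minus signs is even, say `2k`, which gives `⟨û₁, w û₁⟩ = (n - 4k)/n`.
Conversely every coordinate permutation lies in `W(Dₙ)`, so conjugating the reflection in `r₁`
shows that the reflection in `eₐ + e_b` lies in `W(Dₙ)` for all `a ≠ b`. It turns two `+` signs
at positions `a, b` into `-` signs, so applying it to `k` disjoint pairs of coordinates of `û₁`
realises `(n - 4k)/n` for every `2k ≤ n`.
-/

open Submodule (reflection)
open EuclideanSpace (single)

section Reflection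

variable {F : Type*} [NormedAddCommGroup F] [InnerProductSpace ℝ F]

theorem reflection_orthogonal_singleton_apply (r x : F) :
    reflection (ℝ ∙ r)ᗮ x = x - (2 * ⟪x, r⟫ / ⟪r, r⟫) • r := by
  rw [Submodule.reflection_orthogonal_apply, Submodule.reflection_singleton_apply,
    real_inner_self_eq_norm_sq, real_inner_comm, two_nsmul, two_mul, add_div, add_smul]
  simp

theorem reflection_orthogonal_singleton_map (w : F ≃ₗᵢ[ℝ] F) (r : F) :
    reflection (ℝ ∙ w r)ᗮ = w * reflection (ℝ ∙ r)ᗮ * w⁻¹ := by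
  ext1 x
  have hx : ⟪w.symm x, r⟫ = ⟪x, w r⟫ := by
    rw [← w.inner_map_map, w.apply_symm_apply]
  simp [reflection_orthogonal_singleton_apply, hx]

end Reflection

section Coordinates

variable {ι : Type*} [Fintype ι]

def permIsometry : Equiv.Perm ι →* (EuclideanSpace ℝ ι ≃ₗᵢ[ℝ] EuclideanSpace ℝ ι) where
  toFun σ := LinearIsometryEquiv.piLpCongrLeft 2 ℝ ℝ σ
  map_one' := by ext; rfl
  map_mul' _ _ := by ext; rfl

theorem permIsometry_apply (σ : Equiv.Perm ι) (x : EuclideanSpace ℝ ι) (i : ι) :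
    permIsometry σ x i = x (σ.symm i) :=
  rfl

variable [DecidableEq ι]

theorem reflection_single_sub_single {a b : ι} (hab : a ≠ b) :
    reflection (ℝ ∙ (single a 1 - single b 1 : EuclideanSpace ℝ ι))ᗮ =
      permIsometry (Equiv.swap a b) := by
  ext x i
  simp only [reflection_orthogonal_singleton_apply, inner_sub_right,
    EuclideanSpace.inner_single_right, permIsometry_apply, Equiv.symm_swap]
  rcases eq_or_ne i a with rfl | hia
  · simp [hab, ← two_mul]
  rcases eq_or_ne i b with rfl | hib
  · simp [hab, hia, ← two_mul]
  · simp [hia, hib, Equiv.swap_apply_of_ne_of_ne]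

theorem reflection_single_add_single_apply {a b : ι} (hab : a ≠ b) (x : EuclideanSpace ℝ ι)
    (i : ι) :
    reflection (ℝ ∙ (single a 1 + single b 1 : EuclideanSpace ℝ ι))ᗮ x i =
      if i = a then -x b else if i = b then -x a else x i := by
  simp only [reflection_orthogonal_singleton_apply, inner_add_right,
    EuclideanSpace.inner_single_right]
  rcases eq_or_ne i a with rfl | hia
  · simp [hab, ← two_mul]
  rcases eq_or_ne i b with rfl | hib
  · simp [hab, hia, ← two_mul]
  · simp [hia, hib]

theorem prod_reflection_single_add_single {a b : ι} (hab : a ≠ b) (x : EuclideanSpace ℝ ι) :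
    ∏ i, reflection (ℝ ∙ (single a 1 + single b 1 : EuclideanSpace ℝ ι))ᗮ x i = ∏ i, x i := by
  have hb : b ∈ (Finset.univ.erase a) := Finset.mem_erase.2 ⟨hab.symm, Finset.mem_univ b⟩
  rw [← Finset.mul_prod_erase _ _ (Finset.mem_univ a), ← Finset.mul_prod_erase _ _ hb,
    ← Finset.mul_prod_erase _ (fun i => x i) (Finset.mem_univ a),
    ← Finset.mul_prod_erase _ (fun i => x i) hb]
  have hrest : ∀ i ∈ (Finset.univ.erase a).erase b,
      reflection (ℝ ∙ (single a 1 + single b 1 : EuclideanSpace ℝ ι))ᗮ x i = x i := by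
    intro i hi
    obtain ⟨hib, hia, -⟩ := Finset.mem_erase.1 hi |>.imp_right Finset.mem_erase.1
    rw [reflection_single_add_single_apply hab, if_neg hia, if_neg hib]
  rw [Finset.prod_congr rfl hrest, reflection_single_add_single_apply hab,
    reflection_single_add_single_apply hab, if_pos rfl, if_neg hab.symm, if_pos rfl]
  ring

def signVec (c : ℝ) (s : Finset ι) : EuclideanSpace ℝ ι :=
  WithLp.toLp 2 fun i => if i ∈ s then -c else c

theorem eq_signVec {c : ℝ} {x : EuclideanSpace ℝ ι} (hx : ∀ i, x i = c ∨ x i = -c) :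
    x = signVec c {i | x i = -c} := by
  ext i
  rcases hx i with h | h <;> simp [signVec, h]

theorem reflection_single_add_single_signVec {a b : ι} (hab : a ≠ b) (c : ℝ) {s : Finset ι}
    (ha : a ∉ s) (hb : b ∉ s) :
    reflection (ℝ ∙ (single a 1 + single b 1 : EuclideanSpace ℝ ι))ᗮ (signVec c s) =
      signVec c (insert a (insert b s)) := by
  ext i
  rw [reflection_single_add_single_apply hab]
  by_cases hia : i = a <;> by_cases hib : i = b <;> simp_all [signVec]

theorem prod_signVec (c : ℝ) (s : Finset ι) :
    ∏ i, signVec c s i = (-1) ^ s.card * c ^ Fintype.card ι := by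
  have h : ∀ i, signVec c s i = (if i ∈ s then -1 else 1) * c := by
    intro i
    change (if i ∈ s then -c else c) = _
    split_ifs <;> ring
  rw [Finset.prod_congr rfl fun i _ => h i, Finset.prod_mul_distrib, Fintype.prod_ite_mem,
    Finset.prod_const, Finset.prod_const, Finset.card_univ]

theorem inner_signVec_empty (c : ℝ) (s : Finset ι) :
    ⟪signVec c ∅, signVec c s⟫ = (Fintype.card ι - 2 * s.card) * c ^ 2 := by
  have h : ∀ i, signVec c s i = c - 2 * c * (if i ∈ s then 1 else 0) := by
    intro i
    change (if i ∈ s then -c else c) = _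
    split_ifs <;> ring
  have h0 : ∀ i, signVec c (∅ : Finset ι) i = c := fun i => by simp [signVec]
  simp only [PiLp.inner_apply, h, h0, RCLike.inner_apply, conj_trivial, sub_mul,
    Finset.sum_sub_distrib, mul_assoc, ← Finset.mul_sum, ← Finset.sum_mul, Finset.sum_boole,
    Finset.sum_const, Finset.card_univ, Finset.filter_mem_eq_inter, Finset.univ_inter, nsmul_eq_mul]
  ring

end Coordinates

section WeylGroupD

theorem DnRoot_zero (m : ℕ) : DnRoot (m + 2) 0 = single 0 1 + single 1 1 := by
  ext ⟨_ | _ | k, hk⟩ <;> simp [DnRoot, Fin.ext_iff]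

theorem DnRoot_succ (m : ℕ) (i : Fin m) :
    DnRoot (m + 1) i.succ = single i.succ 1 - single i.castSucc 1 := by
  ext j
  simp only [DnRoot, Fin.val_succ, Nat.add_eq_zero_iff, one_ne_zero, and_false, ↓reduceIte,
    Nat.add_right_cancel_iff, PiLp.sub_apply, PiLp.single_apply, Fin.ext_iff, Fin.val_castSucc]
  split_ifs <;> first | omega | norm_num

theorem WeylD_eq_closure (n : ℕ) :
    WeylD n = Subgroup.closure (Set.range fun j => reflection (ℝ ∙ DnRoot n j)ᗮ) := by
  refine congrArg Subgroup.closure (Set.ext fun f => ⟨?_, ?_⟩)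
  · rintro ⟨j, hj⟩
    exact ⟨j, LinearIsometryEquiv.ext fun x => by rw [hj, reflection_orthogonal_singleton_apply]⟩
  · rintro ⟨j, rfl⟩
    exact ⟨j, reflection_orthogonal_singleton_apply _⟩

theorem permIsometry_mem_WeylD {n : ℕ} (σ : Equiv.Perm (Fin n)) : permIsometry σ ∈ WeylD n := by
  obtain _ | m := n
  · rw [Subsingleton.elim σ 1, map_one]
    exact one_mem _
  have hle : Subgroup.closure (Set.range fun i : Fin m => Equiv.swap i.castSucc i.succ) ≤
      (WeylD (m + 1)).comap permIsometry := by
    rw [Subgroup.closure_le]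
    rintro _ ⟨i, rfl⟩
    change permIsometry (Equiv.swap i.castSucc i.succ) ∈ WeylD (m + 1)
    rw [Equiv.swap_comm,
      ← reflection_single_sub_single (Fin.castSucc_lt_succ (i := i)).ne',
      ← DnRoot_succ, WeylD_eq_closure]
    exact Subgroup.subset_closure ⟨i.succ, rfl⟩
  rw [Subgroup.closure_eq_top_of_mclosure_eq_top (Equiv.Perm.mclosure_swap_castSucc_succ m)] at hle
  exact hle (Subgroup.mem_top σ)

theorem reflection_single_add_single_mem_WeylD {n : ℕ} {a b : Fin n} (hab : a ≠ b) :
    reflection (ℝ ∙ (single a 1 + single b 1 : EuclideanSpace ℝ (Fin n)))ᗮ ∈ WeylD n := by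
  obtain ⟨m, rfl⟩ : ∃ m, n = m + 2 := ⟨n - 2, by have := Fin.val_ne_of_ne hab; omega⟩
  set σ := Equiv.swap 0 a * Equiv.swap 1 (Equiv.swap 0 a b)
  have hb : Equiv.swap 0 a b ≠ 0 := by
    simpa using (Equiv.swap 0 a).injective.ne hab.symm
  have hσ0 : σ 0 = a := by
    simp [σ, Equiv.swap_apply_of_ne_of_ne (Fin.zero_ne_one) hb.symm]
  have hσ1 : σ 1 = b := by simp [σ]
  have hroot : permIsometry σ (DnRoot (m + 2) 0) = single a 1 + single b 1 := by
    rw [DnRoot_zero, map_add, ← hσ0, ← hσ1]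
    exact congrArg₂ (· + ·) (EuclideanSpace.piLpCongrLeft_single σ 0 1)
      (EuclideanSpace.piLpCongrLeft_single σ 1 1)
  have hgen : reflection (ℝ ∙ DnRoot (m + 2) 0)ᗮ ∈ WeylD (m + 2) := by
    rw [WeylD_eq_closure]
    exact Subgroup.subset_closure ⟨0, rfl⟩
  rw [← hroot, reflection_orthogonal_singleton_map]
  exact mul_mem (mul_mem (permIsometry_mem_WeylD σ) hgen) (inv_mem (permIsometry_mem_WeylD σ))

theorem WeylD_induction {n : ℕ} (hn : 2 ≤ n)
    {p : (EuclideanSpace ℝ (Fin n) ≃ₗᵢ[ℝ] EuclideanSpace ℝ (Fin n)) → Prop}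
    (perm : ∀ σ, p (permIsometry σ))
    (reflection_add : ∀ a b : Fin n, a ≠ b →
      p (reflection (ℝ ∙ (single a 1 + single b 1 : EuclideanSpace ℝ (Fin n)))ᗮ))
    (mul : ∀ v w, p v → p w → p (v * w)) {w} (hw : w ∈ WeylD n) : p w := by
  obtain ⟨m, rfl⟩ : ∃ m, n = m + 2 := ⟨n - 2, by omega⟩
  have gen : ∀ j, p (reflection (ℝ ∙ DnRoot (m + 2) j)ᗮ) := by
    intro j
    induction j using Fin.cases with
    | zero => rw [DnRoot_zero]; exact reflection_add 0 1 Fin.zero_ne_one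
    | succ i =>
      rw [DnRoot_succ, reflection_single_sub_single (Fin.castSucc_lt_succ (i := i)).ne']
      exact perm _
  rw [WeylD_eq_closure] at hw
  induction hw using Subgroup.closure_induction'' with
  | mem _ h => obtain ⟨j, rfl⟩ := h; exact gen j
  | inv_mem _ h => obtain ⟨j, rfl⟩ := h; rw [Submodule.reflection_inv]; exact gen j
  | one => simpa using perm 1
  | mul _ _ _ _ hv hw => exact mul _ _ hv hw

theorem prod_apply_of_mem_WeylD {n : ℕ} (hn : 2 ≤ n) {w} (hw : w ∈ WeylD n)
    (x : EuclideanSpace ℝ (Fin n)) : ∏ i, w x i = ∏ i, x i := by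
  refine WeylD_induction hn (p := fun w => ∀ x, ∏ i, w x i = ∏ i, x i) ?_ ?_ ?_ hw x
  · exact fun σ x => Equiv.prod_comp σ.symm (fun i => x i)
  · exact fun a b hab => prod_reflection_single_add_single hab
  · exact fun v w hv hw x => (hv (w x)).trans (hw x)

theorem apply_eq_or_eq_neg_of_mem_WeylD {n : ℕ} (hn : 2 ≤ n) {w} (hw : w ∈ WeylD n) {c : ℝ}
    {x : EuclideanSpace ℝ (Fin n)} (hx : ∀ i, x i = c ∨ x i = -c) (i : Fin n) :
    w x i = c ∨ w x i = -c := by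
  refine WeylD_induction hn
    (p := fun w => ∀ x : EuclideanSpace ℝ (Fin n), (∀ i, x i = c ∨ x i = -c) →
      ∀ i, w x i = c ∨ w x i = -c) ?_ ?_ ?_ hw x hx i
  · exact fun σ x hx i => hx _
  · intro a b hab x hx i
    have hneg : ∀ y : ℝ, y = c ∨ y = -c → -y = c ∨ -y = -c := by
      rintro y (rfl | rfl) <;> simp
    rw [reflection_single_add_single_apply hab]
    split_ifs
    exacts [hneg _ (hx b), hneg _ (hx a), hx i]
  · exact fun v w hv hw x hx => hv (w x) (hw x hx)

theorem exists_even_card_of_mem_WeylD {n : ℕ} (hn : 2 ≤ n) {c : ℝ} (hc : c ≠ 0) {w}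
    (hw : w ∈ WeylD n) : ∃ s : Finset (Fin n), Even s.card ∧ w (signVec c ∅) = signVec c s := by
  have hsign := apply_eq_or_eq_neg_of_mem_WeylD hn hw (c := c) (x := signVec c ∅) fun i => by
    simp [signVec]
  refine ⟨_, ?_, eq_signVec hsign⟩
  have hprod := prod_apply_of_mem_WeylD hn hw (signVec c ∅)
  rw [eq_signVec hsign, prod_signVec, prod_signVec, Finset.card_empty, pow_zero, one_mul] at hprod
  refine (neg_one_pow_eq_one_iff_even (by norm_num : (-1 : ℝ) ≠ 1)).1 ?_
  simpa [hc] using hprod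

theorem exists_mem_WeylD_signVec_card_eq_two_mul {n k : ℕ} (hk : 2 * k ≤ n) (c : ℝ) :
    ∃ s : Finset (Fin n), s.card = 2 * k ∧ ∃ w ∈ WeylD n, w (signVec c ∅) = signVec c s := by
  induction k with
  | zero => exact ⟨∅, rfl, 1, one_mem _, rfl⟩
  | succ k ih =>
    obtain ⟨s, hs, w, hw, hws⟩ := ih (by omega)
    obtain ⟨a, b, ha, hb, hab⟩ := Finset.one_lt_card_iff.1 <| show 1 < sᶜ.card by
      rw [Finset.card_compl, Fintype.card_fin]; omega
    rw [Finset.mem_compl] at ha hb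
    refine ⟨insert a (insert b s), ?_, _,
      mul_mem (reflection_single_add_single_mem_WeylD hab) hw, ?_⟩
    · rw [Finset.card_insert_of_notMem (by simp [hab, ha]), Finset.card_insert_of_notMem hb, hs]
      ring
    · rw [LinearIsometryEquiv.coe_mul, Function.comp_apply, hws,
        reflection_single_add_single_signVec hab c ha hb]

end WeylGroupD

theorem u1hatD_eq_signVec (n : ℕ) : u1hatD n = signVec (1 / √n) ∅ := by
  ext
  simp [u1hatD, signVec]

theorem inner_u1hatD_orbit (n : ℕ) (hn : 4 ≤ n) :
    {t : ℝ | ∃ w ∈ WeylD n, ⟪u1hatD n, w (u1hatD n)⟫ = t} =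
      {t : ℝ | ∃ k : ℕ, 2 * k ≤ n ∧ t = ((n : ℝ) - 4 * k) / n} := by
  set c := 1 / √(n : ℝ)
  have hval (s : Finset (Fin n)) : ⟪signVec c ∅, signVec c s⟫ = (n - 2 * s.card) / n := by
    rw [inner_signVec_empty, Fintype.card_fin, div_pow, one_pow, Real.sq_sqrt n.cast_nonneg,
      mul_one_div]
  rw [u1hatD_eq_signVec]
  ext t
  constructor
  · rintro ⟨w, hw, rfl⟩
    obtain ⟨s, ⟨k, hk⟩, hws⟩ :=
      exists_even_card_of_mem_WeylD (by omega) (by positivity : 1 / √(n : ℝ) ≠ 0) hw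
    refine ⟨k, by simpa [hk, two_mul] using s.card_le_univ, ?_⟩
    rw [hws, hval, hk]
    push_cast
    ring
  · rintro ⟨k, hk, rfl⟩
    obtain ⟨s, hs, w, hw, hws⟩ := exists_mem_WeylD_signVec_card_eq_two_mul hk c
    refine ⟨w, hw, ?_⟩
    rw [hws, hval, hs]
    push_cast
    ring
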